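/- arXiv:1912.05776 — 3 statements merged into one kernel-verified Lean document; each statement's English description precedes it below -/
import Mathlib

section
/- Let R be a commutative noetherian ring and Φ ⊆ Spec R a subset. If the full subcategory of R-modules M with Ass M ⊆ Φ is closed under quotient modules, then Φ is specialization-closed (i.e., if p ∈ Φ and p ⊆ q for a prime q, then q ∈ Φ). -/
universe u

/-- Let `R` be a commutative noetherian ring and `Φ ⊆ Spec R`. If the class of `R`-modules `M`
with `Ass M ⊆ Φ` is closed under quotient modules, then `Φ` is specialization-closed. -/
theorem specializationClosed_of_assInv_closed_under_quotients
    (R : Type u) [CommRing R] [IsNoetherianRing R] (Φ : Set (PrimeSpectrum R))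
    (h : ∀ (M N : Type u) [AddCommGroup M] [Module R M] [AddCommGroup N] [Module R N]
      (f : M →ₗ[R] N), Function.Surjective f →
      {p : PrimeSpectrum R | p.asIdeal ∈ associatedPrimes R M} ⊆ Φ →
      {p : PrimeSpectrum R | p.asIdeal ∈ associatedPrimes R N} ⊆ Φ) :
    ∀ p ∈ Φ, ∀ q : PrimeSpectrum R, p.asIdeal ≤ q.asIdeal → q ∈ Φ := by
  intro p hp q hpq
  have hAssP : associatedPrimes R (R ⧸ p.asIdeal) = {p.asIdeal} := by
    rw [associatedPrimes.eq_singleton_of_isPrimary p.isPrime.isPrimary, p.isPrime.radical]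
  have hAssQ : associatedPrimes R (R ⧸ q.asIdeal) = {q.asIdeal} := by
    rw [associatedPrimes.eq_singleton_of_isPrimary q.isPrime.isPrimary, q.isPrime.radical]
  have hle : p.asIdeal ≤ Submodule.comap (LinearMap.id : R →ₗ[R] R) q.asIdeal := hpq
  let f : (R ⧸ p.asIdeal) →ₗ[R] (R ⧸ q.asIdeal) :=
    Submodule.mapQ p.asIdeal q.asIdeal LinearMap.id hle
  have hsurj : Function.Surjective f := by
    intro x
    obtain ⟨y, rfl⟩ := Submodule.Quotient.mk_surjective _ x
    refine ⟨Submodule.Quotient.mk y, ?_⟩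
    show Submodule.mapQ p.asIdeal q.asIdeal LinearMap.id hle (Submodule.Quotient.mk y) = _
    rw [Submodule.mapQ_apply]
    rfl
  have hsubP : {r : PrimeSpectrum R | r.asIdeal ∈ associatedPrimes R (R ⧸ p.asIdeal)} ⊆ Φ := by
    intro r hr
    rw [Set.mem_setOf_eq, hAssP, Set.mem_singleton_iff] at hr
    rwa [PrimeSpectrum.ext hr]
  have hmem : q ∈ {r : PrimeSpectrum R | r.asIdeal ∈ associatedPrimes R (R ⧸ q.asIdeal)} := by
    rw [Set.mem_setOf_eq, hAssQ]
    exact rfl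
  exact h (R ⧸ p.asIdeal) (R ⧸ q.asIdeal) f hsurj hsubP hmem
end

section
/- Let R be a commutative noetherian ring, I an ideal, M an R-module, and n ≥ 0 an integer. Then H^i_I(M) = 0 for all 0 ≤ i ≤ n if and only if there exists an injective resolution 0 → M → I^0 → I^1 → ⋯ of M such that Ass I^i ∩ V(I) = ∅ for all 0 ≤ i ≤ n. -/
/-!
Over a noetherian ring, `Γ_I(N) = 0` iff no associated prime of `N` contains `I`, so the condition
on the resolution says `Γ_I(I^i) = 0` for `i ≤ n`; then the complex `Γ_I(I^•)`, whose cohomology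
is `H^•_I(M)`, vanishes in degrees `≤ n`.

Conversely, by Artin–Rees `Γ_I(E)` is injective whenever `E` is, so it splits off `E` with an
`I`-torsion-free injective complement; hence an `I`-torsion-free module embeds into an
`I`-torsion-free injective module. Build a resolution by such embeddings `M^i ↪ I^i` of the
successive cosyzygies. If `Γ_I(I^{i-1}) = 0`, then `H^i_I(M) = 0` says that
`Γ_I(I^i) → Γ_I(I^{i+1})` is injective; since `M^i ↪ I^i → I^{i+1}` is zero, `Γ_I(M^i) = 0`
and therefore `Γ_I(I^i) = 0`.
-/

open CategoryTheory

/-- The `I`-torsion submodule `Γ_I(M) = {x ∈ M | I^n x = 0 for some n}`. -/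
def torsionIdeal (R : Type*) [CommRing R] (I : Ideal R)
    (M : Type*) [AddCommGroup M] [Module R M] : Submodule R M where
  carrier := {x | ∃ n : ℕ, ∀ a ∈ I ^ n, a • x = 0}
  zero_mem' := ⟨0, fun a _ => smul_zero a⟩
  add_mem' := by
    rintro x y ⟨n, hn⟩ ⟨m, hm⟩
    refine ⟨n + m, fun a ha => ?_⟩
    rw [smul_add, hn a (Ideal.pow_le_pow_right (by omega) ha),
      hm a (Ideal.pow_le_pow_right (by omega) ha), add_zero]
  smul_mem' := by
    rintro c x ⟨n, hn⟩
    exact ⟨n, fun a ha => by rw [smul_comm, hn a ha, smul_zero]⟩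

lemma torsionIdeal_map_mem {R : Type*} [CommRing R] (I : Ideal R)
    {M N : Type*} [AddCommGroup M] [Module R M] [AddCommGroup N] [Module R N]
    (f : M →ₗ[R] N) : ∀ x ∈ torsionIdeal R I M, f x ∈ torsionIdeal R I N := by
  rintro x ⟨n, hn⟩
  exact ⟨n, fun a ha => by rw [← map_smul, hn a ha, map_zero]⟩

/-- The `I`-torsion functor `Γ_I : Mod R ⥤ Mod R`. -/
def torsionIdealFunctor (R : Type u) [CommRing R] (I : Ideal R) :
    ModuleCat.{u} R ⥤ ModuleCat.{u} R where
  obj M := ModuleCat.of R (torsionIdeal R I M)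
  map f := ModuleCat.ofHom (f.hom.restrict (torsionIdeal_map_mem I f.hom))
  map_id _ := rfl
  map_comp _ _ := rfl

instance (R : Type u) [CommRing R] (I : Ideal R) :
    (torsionIdealFunctor R I).Additive where
  map_add := by intros; rfl

/-- The `i`-th local cohomology functor with respect to the ideal `I`, i.e. the `i`-th right
derived functor of the `I`-torsion functor `Γ_I`. -/
noncomputable def localCohomologyIdeal (R : Type u) [CommRing R] (I : Ideal R) (i : ℕ) :
    ModuleCat.{u} R ⥤ ModuleCat.{u} R :=
  (torsionIdealFunctor R I).rightDerived i

open Limits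

universe u v

section Torsion

variable {R : Type u} [CommRing R] {I : Ideal R} {M : Type v} [AddCommGroup M] [Module R M]

lemma torsionIdeal_eq_bot_iff_forall_associatedPrimes [IsNoetherianRing R] :
    torsionIdeal R I M = ⊥ ↔ ∀ q ∈ associatedPrimes R M, ¬ I ≤ q := by
  constructor
  · rintro h q hq hIq
    obtain ⟨hq, x, rfl⟩ := isAssociatedPrime_iff.mp hq
    have hx : x ∈ torsionIdeal R I M := ⟨1, fun a ha => by
      simpa using Submodule.mem_colon_singleton.1 (hIq (by simpa using ha))⟩
    rw [h, Submodule.mem_bot] at hx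
    subst hx
    exact hq.ne_top (eq_top_iff.2 fun a _ => Submodule.mem_colon_singleton.2 (by simp))
  · intro h
    rw [Submodule.eq_bot_iff]
    by_contra! ⟨x, ⟨n, hn⟩, hx⟩
    obtain ⟨q, hq, hle⟩ := exists_le_isAssociatedPrime_of_isNoetherianRing R x hx
    exact h q hq (hq.isPrime.le_of_pow_le fun a ha => hle (Submodule.mem_colon_singleton.2 (by
      simpa using hn a ha)))

lemma mem_torsionIdeal_of_injective {N : Type*} [AddCommGroup N] [Module R N] {f : M →ₗ[R] N}
    (hf : Function.Injective f) {x : M} (hx : f x ∈ torsionIdeal R I N) :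
    x ∈ torsionIdeal R I M := by
  obtain ⟨n, hn⟩ := hx
  exact ⟨n, fun a ha => hf (by rw [map_smul, hn a ha, map_zero])⟩

lemma torsionIdeal_eq_iSup_torsionBySet_pow :
    torsionIdeal R I M = ⨆ k, Submodule.torsionBySet R M (I ^ k : Ideal R) := by
  refine le_antisymm ?_ (iSup_le fun k x hx => ⟨k, fun a ha => ?_⟩)
  · rintro x ⟨k, hk⟩
    exact Submodule.mem_iSup_of_mem k ((Submodule.mem_torsionBySet_iff _ _).2 fun a => hk a a.2)
  · exact (Submodule.mem_torsionBySet_iff _ _).1 hx ⟨a, ha⟩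

lemma exists_le_torsionBySet_pow_of_fg {N : Submodule R M} (hN : N.FG)
    (h : N ≤ torsionIdeal R I M) : ∃ k, N ≤ Submodule.torsionBySet R M (I ^ k : Ideal R) := by
  have hmono : Monotone fun k => Submodule.torsionBySet R M (I ^ k : Ideal R) :=
    fun k l hkl => Submodule.torsionBySet_le_torsionBySet_of_subset (Ideal.pow_le_pow_right hkl)
  obtain ⟨_, ⟨k, rfl⟩, hk⟩ := (CompleteLattice.isCompactElement_iff_le_of_directed_sSup_le _ _).1
    ((Submodule.fg_iff_compact N).1 hN) _ (Set.range_nonempty _)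
    (directedOn_range.2 hmono.directed_le)
    (by rwa [sSup_range, ← torsionIdeal_eq_iSup_torsionBySet_pow])
  exact ⟨k, hk⟩

end Torsion

instance (R : Type u) [CommRing R] (I : Ideal R) :
    (torsionIdealFunctor R I).PreservesMonomorphisms where
  preserves f hf := (ModuleCat.mono_iff_injective _).2 fun _ _ hxy =>
    Subtype.ext ((ModuleCat.mono_iff_injective f).1 hf (congrArg Subtype.val hxy))

lemma isZero_torsionIdealFunctor_obj_iff {R : Type u} [CommRing R] {I : Ideal R}
    {X : ModuleCat.{u} R} : IsZero ((torsionIdealFunctor R I).obj X) ↔ torsionIdeal R I X = ⊥ :=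
  ModuleCat.isZero_iff_subsingleton.trans Submodule.subsingleton_iff_eq_bot

lemma Ideal.exists_pow_inf_le_pow_smul {R : Type*} [CommRing R] [IsNoetherianRing R]
    (I J : Ideal R) (n : ℕ) : ∃ m, I ^ m ⊓ J ≤ I ^ n • J := by
  obtain ⟨k, hk⟩ := Ideal.exists_pow_inf_eq_pow_smul I J
  refine ⟨n + k, ?_⟩
  have := hk (n + k) (by omega)
  simp only [smul_eq_mul, Ideal.mul_top, Nat.add_sub_cancel] at this
  rw [this]
  exact Submodule.smul_mono le_rfl inf_le_right

lemma baer_torsionIdeal {R : Type u} [CommRing R] [IsNoetherianRing R] (I : Ideal R)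
    {E : Type v} [AddCommGroup E] [Module R E] [Small.{v} R] [Module.Injective R E] :
    Module.Baer R (torsionIdeal R I E) := by
  intro J g
  set g' : J →ₗ[R] E := (torsionIdeal R I E).subtype ∘ₗ g
  obtain ⟨n, hn⟩ := exists_le_torsionBySet_pow_of_fg (N := LinearMap.range g')
    (LinearMap.range_eq_map g' ▸ Module.Finite.fg_top.map g')
    (by rintro _ ⟨x, rfl⟩; exact (g x).2)
  have hker : I ^ n • (⊤ : Submodule R J) ≤ LinearMap.ker g' :=
    Submodule.smul_le.2 fun a ha y _ => by
      rw [LinearMap.mem_ker, map_smul]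
      exact (Submodule.mem_torsionBySet_iff _ _).1 (hn ⟨y, rfl⟩) ⟨a, ha⟩
  obtain ⟨m, hm⟩ := Ideal.exists_pow_inf_le_pow_smul I J n
  -- `g'` factors through `J ⧸ (I ^ m ⊓ J) ↪ R ⧸ I ^ m`
  let p : Submodule R J := Submodule.comap J.subtype (I ^ m)
  have hp : p ≤ LinearMap.ker g' := fun x hx =>
    hker ((Submodule.mem_smul_top_iff _ _ _).2 (hm ⟨hx, x.2⟩))
  let φ : (J ⧸ p) →ₗ[R] R ⧸ I ^ m := p.mapQ (I ^ m) J.subtype le_rfl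
  have hφ : Function.Injective φ := by
    rw [← LinearMap.ker_eq_bot, Submodule.ker_mapQ, Submodule.mkQ_map_self]
  obtain ⟨G, hG⟩ := Module.Injective.extension_property R E _ _ φ hφ (p.liftQ g' hp)
  have hG_mem : ∀ r, G ((I ^ m).mkQ r) ∈ torsionIdeal R I E := fun r =>
    ⟨m, fun a ha => by
      rw [← map_smul, ← map_smul, smul_eq_mul, Submodule.mkQ_apply,
        (Submodule.Quotient.mk_eq_zero _).2 (Ideal.mul_mem_right r _ ha), map_zero]⟩
  refine ⟨LinearMap.codRestrict _ (G ∘ₗ (I ^ m).mkQ) hG_mem, fun x hx => Subtype.ext ?_⟩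
  exact LinearMap.congr_fun hG (p.mkQ ⟨x, hx⟩)

lemma Module.Injective.of_isCompl {R : Type*} [Ring R] {E : Type v} [AddCommGroup E] [Module R E]
    [Module.Injective R E] {p q : Submodule R E} (h : IsCompl p q) : Module.Injective R p where
  out X Y _ _ _ _ f hf g := by
    obtain ⟨G, hG⟩ := Module.Injective.out f hf (p.subtype ∘ₗ g)
    refine ⟨Submodule.projectionOnto p q h ∘ₗ G, fun x => ?_⟩
    rw [LinearMap.comp_apply, hG]
    exact Submodule.projectionOnto_apply_left h (g x)

section Presentation

variable {R : Type u} [CommRing R] [IsNoetherianRing R] (I : Ideal R)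

lemma exists_injectivePresentation_torsionIdeal_eq_bot (X : ModuleCat.{u} R) :
    ∃ P : InjectivePresentation X, torsionIdeal R I X = ⊥ → torsionIdeal R I P.J = ⊥ := by
  by_cases hX : torsionIdeal R I X = ⊥
  swap
  · exact ⟨(EnoughInjectives.presentation X).some, fun h => absurd h hX⟩
  let P₀ : InjectivePresentation X := (EnoughInjectives.presentation X).some
  have := P₀.injective
  have : Module.Injective R P₀.J := Module.injective_module_of_injective_object R P₀.J
  set T := torsionIdeal R I P₀.J
  obtain ⟨r, hr⟩ := (baer_torsionIdeal I (E := P₀.J)).extension_property T.subtype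
    T.injective_subtype LinearMap.id
  set K := LinearMap.ker r
  have hTK : IsCompl T K := LinearMap.isCompl_of_proj (LinearMap.congr_fun hr)
  have : Module.Injective R K := Module.Injective.of_isCompl hTK.symm
  let π := Submodule.projectionOnto K T hTK.symm
  refine ⟨⟨ModuleCat.of R K, Module.injective_object_of_injective_module R K,
    ModuleCat.ofHom (π ∘ₗ P₀.f.hom), ?_⟩, fun _ => ?_⟩
  · refine (ModuleCat.mono_iff_injective _).2 (show Function.Injective (π ∘ₗ P₀.f.hom) from ?_)
    rw [← LinearMap.ker_eq_bot, LinearMap.ker_comp, Submodule.ker_projectionOnto,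
      Submodule.eq_bot_iff]
    intro x hx
    have hinj := (ModuleCat.mono_iff_injective P₀.f).1 P₀.mono
    exact (Submodule.eq_bot_iff _).1 hX x (mem_torsionIdeal_of_injective hinj hx)
  · rw [Submodule.eq_bot_iff]
    intro z hz
    have hzT : (z : P₀.J) ∈ T := torsionIdeal_map_mem I K.subtype z hz
    exact Subtype.ext ((Submodule.disjoint_def.1 hTK.disjoint) _ hzT z.2)

end Presentation

lemma CochainComplex.mono_d_of_exactAt {D : Type*} [Category D] [Abelian D]
    {K : CochainComplex D ℕ} {i : ℕ} (hK : K.ExactAt i)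
    (h : K.d ((ComplexShape.up ℕ).prev i) i = 0) : Mono (K.d i (i + 1)) := by
  rw [HomologicalComplex.exactAt_iff' K _ i (i + 1) rfl (by simp)] at hK
  exact (ShortComplex.exact_iff_mono _ h).1 hK

lemma CategoryTheory.Functor.isZero_rightDerived_obj_iff_exactAt {C D : Type*} [Category C]
    [Abelian C] [HasInjectiveResolutions C] [Category D] [Abelian D] (F : C ⥤ D) [F.Additive]
    {Z : C} (res : InjectiveResolution Z) (i : ℕ) :
    IsZero ((F.rightDerived i).obj Z) ↔
      ((F.mapHomologicalComplex _).obj res.cocomplex).ExactAt i := by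
  rw [HomologicalComplex.exactAt_iff_isZero_homology]
  exact (res.isoRightDerivedObj F i).isZero_iff

namespace CategoryTheory.InjectiveResolution

variable {C : Type u} [Category.{v} C] [Abelian C] (P : ∀ X : C, InjectivePresentation X) (Z : C)

noncomputable def cosyzygy : ℕ → C
  | 0 => Z
  | i + 1 => cokernel (P (cosyzygy i)).f

noncomputable def cosyzygyπ (i : ℕ) : (P (cosyzygy P Z i)).J ⟶ cosyzygy P Z (i + 1) :=
  cokernel.π (P (cosyzygy P Z i)).f

instance (i : ℕ) : Epi (cosyzygyπ P Z i) :=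
  inferInstanceAs (Epi (cokernel.π (P (cosyzygy P Z i)).f))

lemma f_comp_cosyzygyπ (i : ℕ) : (P (cosyzygy P Z i)).f ≫ cosyzygyπ P Z i = 0 :=
  cokernel.condition _

lemma exact_f_cosyzygyπ (i : ℕ) :
    (ShortComplex.mk _ _ (f_comp_cosyzygyπ P Z i)).Exact :=
  ShortComplex.exact_cokernel _

noncomputable def ofPresentationsD (i : ℕ) :
    (P (cosyzygy P Z i)).J ⟶ (P (cosyzygy P Z (i + 1))).J :=
  cosyzygyπ P Z i ≫ (P _).f

lemma f_comp_ofPresentationsD (i : ℕ) : (P (cosyzygy P Z i)).f ≫ ofPresentationsD P Z i = 0 := by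
  rw [ofPresentationsD, ← Category.assoc, f_comp_cosyzygyπ, zero_comp]

lemma exact_f_ofPresentationsD (i : ℕ) :
    (ShortComplex.mk _ _ (f_comp_ofPresentationsD P Z i)).Exact := by
  let φ : ShortComplex.mk _ _ (f_comp_cosyzygyπ P Z i) ⟶
      ShortComplex.mk _ _ (f_comp_ofPresentationsD P Z i) :=
    { τ₁ := 𝟙 _, τ₂ := 𝟙 _, τ₃ := (P _).f
      comm₂₃ := Category.id_comp _ }
  have : Mono φ.τ₃ := (P _).mono
  exact (ShortComplex.exact_iff_of_epi_of_isIso_of_mono φ).1 (exact_f_cosyzygyπ P Z i)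

noncomputable def ofPresentationsCocomplex : CochainComplex C ℕ :=
  CochainComplex.of (fun i => (P (cosyzygy P Z i)).J) (ofPresentationsD P Z) fun i => by
    rw [ofPresentationsD, Category.assoc, f_comp_ofPresentationsD, comp_zero]

lemma ofPresentationsCocomplex_d (i : ℕ) :
    (ofPresentationsCocomplex P Z).d i (i + 1) = ofPresentationsD P Z i :=
  CochainComplex.of_d (fun i => (P (cosyzygy P Z i)).J) (ofPresentationsD P Z) i

lemma ofPresentationsCocomplex_exactAt_succ (i : ℕ) :
    (ofPresentationsCocomplex P Z).ExactAt (i + 1) := by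
  rw [HomologicalComplex.exactAt_iff' _ i (i + 1) (i + 2) (by simp) (by simp)]
  let φ : (ofPresentationsCocomplex P Z).sc' i (i + 1) (i + 2) ⟶
      ShortComplex.mk _ _ (f_comp_ofPresentationsD P Z (i + 1)) :=
    { τ₁ := cosyzygyπ P Z i, τ₂ := 𝟙 _, τ₃ := 𝟙 _
      comm₁₂ := ((Category.comp_id _).trans (ofPresentationsCocomplex_d P Z i)).symm
      comm₂₃ := (Category.id_comp _).trans
        ((ofPresentationsCocomplex_d P Z (i + 1)).symm.trans (Category.comp_id _).symm) }
  have : Epi φ.τ₁ := inferInstanceAs (Epi (cosyzygyπ P Z i))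
  have : IsIso φ.τ₂ := inferInstanceAs (IsIso (𝟙 _))
  have : Mono φ.τ₃ := inferInstanceAs (Mono (𝟙 _))
  exact (ShortComplex.exact_iff_of_epi_of_isIso_of_mono φ).2 (exact_f_ofPresentationsD P Z _)

lemma f_comp_ofPresentationsCocomplex_d (i : ℕ) :
    (P (cosyzygy P Z i)).f ≫ (ofPresentationsCocomplex P Z).d i (i + 1) = 0 := by
  rw [ofPresentationsCocomplex_d]; exact f_comp_ofPresentationsD P Z i

noncomputable def ofPresentations : InjectiveResolution Z where
  cocomplex := ofPresentationsCocomplex P Z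
  injective i := (P (cosyzygy P Z i)).injective
  ι := (CochainComplex.fromSingle₀Equiv _ _).symm
    ⟨(P Z).f, f_comp_ofPresentationsCocomplex_d P Z 0⟩
  quasiIso := ⟨fun i => by
    cases i with
    | zero =>
      rw [CochainComplex.quasiIsoAt₀_iff, ShortComplex.quasiIso_iff_of_zeros]
      · refine (ShortComplex.exact_and_mono_f_iff_of_iso ?_).2
          ⟨exact_f_ofPresentationsD P Z 0, (P Z).mono⟩
        exact ShortComplex.isoMk (Iso.refl _) (Iso.refl _) (Iso.refl _)
          (by
            refine (Category.id_comp _).trans (Eq.trans ?_ (Category.comp_id _).symm)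
            exact (CochainComplex.fromSingle₀Equiv_symm_apply_f_zero
              (C := ofPresentationsCocomplex P Z) _
              (f_comp_ofPresentationsCocomplex_d P Z 0)).symm)
          ((Category.id_comp _).trans
            ((ofPresentationsCocomplex_d P Z 0).symm.trans (Category.comp_id _).symm))
      all_goals rfl
    | succ i =>
      rw [quasiIsoAt_iff_exactAt _ _ (CochainComplex.exactAt_succ_single_obj _ _)]
      exact ofPresentationsCocomplex_exactAt_succ P Z i⟩

variable {D : Type*} [Category D] [Abelian D] (F : C ⥤ D) [F.PreservesZeroMorphisms]
  [F.PreservesMonomorphisms]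

lemma isZero_obj_cosyzygy_of_mono (i : ℕ)
    [Mono (F.map ((ofPresentations P Z).cocomplex.d i (i + 1)))] :
    IsZero (F.obj (cosyzygy P Z i)) := by
  let f : cosyzygy P Z i ⟶ (ofPresentations P Z).cocomplex.X i := (P _).f
  have : Mono f := (P _).mono
  have hf : f ≫ (ofPresentations P Z).cocomplex.d i (i + 1) = 0 :=
    f_comp_ofPresentationsCocomplex_d P Z i
  exact IsZero.of_mono_eq_zero (F.map f ≫ F.map _) (by rw [← F.map_comp, hf, F.map_zero])

lemma isZero_obj_ofPresentations_X
    (hP : ∀ X, IsZero (F.obj X) → IsZero (F.obj (P X).J)) {n : ℕ}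
    (h : ∀ i ≤ n, ((F.mapHomologicalComplex _).obj (ofPresentations P Z).cocomplex).ExactAt i) :
    ∀ i ≤ n, IsZero (F.obj ((ofPresentations P Z).cocomplex.X i)) := by
  set K := (F.mapHomologicalComplex _).obj (ofPresentations P Z).cocomplex
  suffices hstep : ∀ i ≤ n, K.d ((ComplexShape.up ℕ).prev i) i = 0 →
      IsZero (F.obj ((ofPresentations P Z).cocomplex.X i)) by
    intro i hi
    induction i with
    | zero => exact hstep 0 hi (K.shape _ _ (by simp))
    | succ i ih =>
      refine hstep (i + 1) hi ?_
      rw [CochainComplex.prev_nat_succ]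
      exact (ih (by omega)).eq_of_src _ _
  intro i hi hd
  have : Mono (F.map ((ofPresentations P Z).cocomplex.d i (i + 1))) :=
    CochainComplex.mono_d_of_exactAt (h i hi) hd
  exact hP _ (isZero_obj_cosyzygy_of_mono P Z F i)

end CategoryTheory.InjectiveResolution

/-- Let `R` be a commutative noetherian ring, `I` an ideal, `M` an `R`-module, `n ≥ 0`. Then
`H^i_I(M) = 0` for all `0 ≤ i ≤ n` iff there is an injective resolution `0 → M → I^0 → I^1 → ⋯`
with `Ass I^i ∩ V(I) = ∅` for all `0 ≤ i ≤ n`. -/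
theorem localCohomologyIdeal_vanishing_iff_injectiveResolution
    (R : Type u) [CommRing R] [IsNoetherianRing R] (I : Ideal R) (n : ℕ)
    (M : ModuleCat.{u} R) :
    (∀ i : ℕ, i ≤ n → IsZero ((localCohomologyIdeal R I i).obj M)) ↔
      ∃ res : InjectiveResolution M,
        ∀ i : ℕ, i ≤ n → ∀ q ∈ associatedPrimes R (res.cocomplex.X i), ¬ I ≤ q := by
  simp only [← torsionIdeal_eq_bot_iff_forall_associatedPrimes,
    ← isZero_torsionIdealFunctor_obj_iff, localCohomologyIdeal]
  constructor
  · intro hvan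
    choose P hP using exists_injectivePresentation_torsionIdeal_eq_bot I
    refine ⟨InjectiveResolution.ofPresentations P M,
      InjectiveResolution.isZero_obj_ofPresentations_X P M _ ?_ fun i hi => ?_⟩
    · simpa only [isZero_torsionIdealFunctor_obj_iff] using hP
    · exact ((torsionIdealFunctor R I).isZero_rightDerived_obj_iff_exactAt _ i).1 (hvan i hi)
  · rintro ⟨res, hres⟩ i hi
    exact ((torsionIdealFunctor R I).isZero_rightDerived_obj_iff_exactAt res i).2
      (.of_isZero (hres i hi))
end

section
/- Let R be a local commutative noetherian ring and I an ideal with dim R/I = dim R. Then every balanced big Cohen–Macaulay R/I-module is a balanced big Cohen–Macaulay R-module, when regarded as an R-module via restriction of scalars. -/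
/-! A system of parameters `x₁, …, x_d` of `R` maps to one of `R ⧸ I`: the length is right because
`dim R/I = dim R`, and the radical of `(x̄₁, …, x̄_d)` is the image of the radical of
`(x₁, …, x_d) + I`, which is still `m` because `I ⊆ m` (`R ⧸ I ≠ 0`, having the
dimension of `R`). A sequence in `R` acts on `B` exactly
as its image in `R ⧸ I` does, so it is `B`-regular, and `m B = m̄ B ≠ B`. -/

namespace Ideal

variable {R S : Type*} [CommRing R] [CommRing S]

theorem radical_sup_eq_of_le_radical {I J : Ideal R} (h : I ≤ J.radical) :
    (J ⊔ I).radical = J.radical :=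
  le_antisymm (radical_le_radical_iff.mpr (sup_le le_radical h)) (radical_mono le_sup_left)

theorem radical_map_of_surjective_of_ker_le_radical {f : R →+* S}
    (hf : Function.Surjective f) {J : Ideal R} (h : RingHom.ker f ≤ J.radical) :
    (J.map f).radical = J.radical.map f := by
  have hJ : J.map f = (J ⊔ RingHom.ker f).map f := by
    rw [map_sup, (map_eq_bot_iff_le_ker f).mpr le_rfl, sup_bot_eq]
  rw [hJ, ← map_radical_of_surjective hf le_sup_right, radical_sup_eq_of_le_radical h]

theorem ne_top_of_ringKrullDim_quotient_eq [Nontrivial R] {I : Ideal R}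
    (h : ringKrullDim (R ⧸ I) = ringKrullDim R) : I ≠ ⊤ := by
  rintro rfl
  have := ringKrullDim_nonneg_of_nontrivial (R := R)
  rw [← h, ringKrullDim_eq_bot_of_subsingleton] at this
  exact WithBot.not_coe_le_bot _ this

theorem map_algebraMap_smul_top_eq_top_iff {M : Type*} [Algebra R S] [AddCommGroup M]
    [Module R M] [Module S M] [IsScalarTower R S M] (I : Ideal R) :
    I.map (algebraMap R S) • (⊤ : Submodule S M) = ⊤ ↔ I • (⊤ : Submodule R M) = ⊤ := by
  rw [← Submodule.restrictScalars_eq_top_iff R, smul_restrictScalars,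
    Submodule.restrictScalars_top]

end Ideal

-- `m` is explicit so that on `R ⧸ I` it can be the image of `m_R` rather than `maximalIdeal (R ⧸ I)`.
def IsSystemOfParameters {R : Type*} [CommRing R] (m : Ideal R) (xs : List R) : Prop :=
  (xs.length : WithBot ℕ∞) = ringKrullDim R ∧ (Ideal.ofList xs).radical = m

theorem IsSystemOfParameters.map_quotient {R : Type*} [CommRing R] {m I : Ideal R} {xs : List R}
    (h : IsSystemOfParameters m xs) (hdim : ringKrullDim (R ⧸ I) = ringKrullDim R)
    (hI : I ≤ m) :
    IsSystemOfParameters (m.map (Ideal.Quotient.mk I)) (xs.map (Ideal.Quotient.mk I)) := by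
  refine ⟨by rw [List.length_map, hdim, h.1], ?_⟩
  rw [← Ideal.map_ofList, Ideal.radical_map_of_surjective_of_ker_le_radical
    Ideal.Quotient.mk_surjective (by rwa [Ideal.mk_ker, h.2]), h.2]

theorem RingTheory.Sequence.isRegular_map_algebraMap_iff {R : Type*} (S : Type*) {M : Type*}
    [CommRing R] [CommRing S] [Algebra R S] [AddCommGroup M] [Module R M] [Module S M]
    [IsScalarTower R S M] (rs : List R) :
    IsRegular M (rs.map (algebraMap R S)) ↔ IsRegular M rs :=
  (AddEquiv.refl M).isRegular_congr <| List.forall₂_map_left_iff.mpr <|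
    List.forall₂_same.mpr fun r _ => algebraMap_smul S r

theorem balancedBigCohenMacaulay_of_quotient_general
    (R : Type*) [CommRing R] [IsLocalRing R]
    (I : Ideal R) (hdim : ringKrullDim (R ⧸ I) = ringKrullDim R)
    (B : Type*) [AddCommGroup B] [Module (R ⧸ I) B]
    (hB1 : ((IsLocalRing.maximalIdeal R).map (Ideal.Quotient.mk I)) •
        (⊤ : Submodule (R ⧸ I) B) ≠ ⊤)
    (hB2 : ∀ xs : List (R ⧸ I),
      (xs.length : WithBot (WithTop ℕ)) = ringKrullDim (R ⧸ I) →
      (Ideal.span {x | x ∈ xs}).radical = (IsLocalRing.maximalIdeal R).map (Ideal.Quotient.mk I) →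
      RingTheory.Sequence.IsRegular B xs) :
    letI : Module R B := Module.compHom B (Ideal.Quotient.mk I)
    ((IsLocalRing.maximalIdeal R) • (⊤ : Submodule R B) ≠ ⊤) ∧
    (∀ xs : List R, (xs.length : WithBot (WithTop ℕ)) = ringKrullDim R →
      (Ideal.span {x | x ∈ xs}).radical = IsLocalRing.maximalIdeal R →
      RingTheory.Sequence.IsRegular B xs) := by
  let : Module R B := Module.compHom B (Ideal.Quotient.mk I)
  have : IsScalarTower R (R ⧸ I) B := IsScalarTower.of_algebraMap_smul fun _ _ => rfl
  have hI : I ≤ IsLocalRing.maximalIdeal R :=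
    IsLocalRing.le_maximalIdeal (Ideal.ne_top_of_ringKrullDim_quotient_eq hdim)
  refine ⟨(Ideal.map_algebraMap_smul_top_eq_top_iff _).not.mp hB1, fun xs hlen hrad => ?_⟩
  obtain ⟨hlen', hrad'⟩ := IsSystemOfParameters.map_quotient ⟨hlen, hrad⟩ hdim hI
  exact (RingTheory.Sequence.isRegular_map_algebraMap_iff (R ⧸ I) xs).mp (hB2 _ hlen' hrad')

/-- Let `R` be a commutative noetherian local ring and `I` an ideal with
`dim R/I = dim R`. Then every balanced big Cohen–Macaulay `R/I`-module `B` is a balanced big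
Cohen–Macaulay `R`-module (via restriction of scalars): `m_R B ≠ B` and every system of
parameters of `R` (a sequence of `dim R` elements generating an `m_R`-primary ideal) is a
`B`-regular sequence.  Here a balanced big Cohen–Macaulay `R/I`-module means
`m_{R/I} B ≠ B` and every system of parameters of `R/I` is a `B`-regular sequence, with
`m_{R/I}` the image of `m_R` in `R/I`. -/
theorem balancedBigCohenMacaulay_of_quotient
    (R : Type*) [CommRing R] [IsNoetherianRing R] [IsLocalRing R]
    (I : Ideal R) (hdim : ringKrullDim (R ⧸ I) = ringKrullDim R)
    (B : Type*) [AddCommGroup B] [Module (R ⧸ I) B]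
    (hB1 : ((IsLocalRing.maximalIdeal R).map (Ideal.Quotient.mk I)) •
        (⊤ : Submodule (R ⧸ I) B) ≠ ⊤)
    (hB2 : ∀ xs : List (R ⧸ I),
      (xs.length : WithBot (WithTop ℕ)) = ringKrullDim (R ⧸ I) →
      (Ideal.span {x | x ∈ xs}).radical = (IsLocalRing.maximalIdeal R).map (Ideal.Quotient.mk I) →
      RingTheory.Sequence.IsRegular B xs) :
    letI : Module R B := Module.compHom B (Ideal.Quotient.mk I)
    ((IsLocalRing.maximalIdeal R) • (⊤ : Submodule R B) ≠ ⊤) ∧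
    (∀ xs : List R, (xs.length : WithBot (WithTop ℕ)) = ringKrullDim R →
      (Ideal.span {x | x ∈ xs}).radical = IsLocalRing.maximalIdeal R →
      RingTheory.Sequence.IsRegular B xs) :=
  balancedBigCohenMacaulay_of_quotient_general R I hdim B hB1 hB2
end
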